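/- arXiv:2311.05949 — 6 statements merged into one kernel-verified Lean document; each statement's English description precedes it below -/
import Mathlib

section
/- Suppose that for every n ≥ 0 the three-term relations x·ℙ_n(x,y) = L_{n,1} ℙ_{n+1}(x,y) + D_{n,1} ℙ_n(x,y) + C_{n,1} ℙ_{n−1}(x,y) and y·ℙ_n(x,y) = L_{n,2} ℙ_{n+1}(x,y) + D_{n,2} ℙ_n(x,y) + C_{n,2} ℙ_{n−1}(x,y) hold for all (x,y) ∈ ℝ², and that the family of all component functions {(ℙ_n)_j : 0 ≤ j ≤ n, n ≥ 0} is linearly independent over ℝ. Then for every n ≥ 0 (with the empty-matrix conventions): (a) C_{n,1} C_{n−1,2} = C_{n,2} C_{n−1,1}; (b) D_{n,1} C_{n,2} + C_{n,1} D_{n−1,2} = D_{n,2} C_{n,1} + C_{n,2} D_{n−1,1}; (c) L_{n,1} C_{n+1,2} + D_{n,1} D_{n,2} + C_{n,1} L_{n−1,2} = L_{n,2} C_{n+1,1} + D_{n,2} D_{n,1} + C_{n,2} L_{n−1,1}; (d) L_{n,1} D_{n+1,2} + D_{n,1} L_{n,2} = L_{n,2} D_{n+1,1} + D_{n,2} L_{n,1}.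 -/
open Matrix

/-- The shift matrix `L_{n,1}` of size `(n+1) × (n+2)`: `(L_{n,1})_{ij} = 1` iff `j = i`. -/
def shiftL1 (n : ℕ) : Matrix (Fin (n + 1)) (Fin (n + 2)) ℝ :=
  fun i j => if (j : ℕ) = (i : ℕ) then 1 else 0

/-- The shift matrix `L_{n,2}` of size `(n+1) × (n+2)`: `(L_{n,2})_{ij} = 1` iff `j = i + 1`. -/
def shiftL2 (n : ℕ) : Matrix (Fin (n + 1)) (Fin (n + 2)) ℝ :=
  fun i j => if (j : ℕ) = (i : ℕ) + 1 then 1 else 0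


private lemma extract_aux (P : (n : ℕ) → ℝ × ℝ → Fin (n + 1) → ℝ)
    (hli : LinearIndependent ℝ
      (fun p : Σ n : ℕ, Fin (n + 1) => fun xy : ℝ × ℝ => P p.1 xy p.2))
    {r : ℕ} (N : ℕ) (A : (k : ℕ) → Matrix (Fin r) (Fin (k + 1)) ℝ)
    (h : ∀ x y : ℝ, ∑ k ∈ Finset.range N, (A k).mulVec (P k (x, y)) = 0) :
    ∀ m < N, A m = 0 := by
  rw [linearIndependent_iff'] at hli
  intro m hm
  ext i j
  have key := hli ((Finset.range N).sigma (fun k => Finset.univ))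
      (fun p => A p.1 i p.2) ?_ ⟨m, j⟩ (by simp [hm])
  · simpa using key
  · funext xy
    have h2 := congrFun (h xy.1 xy.2) i
    simp only [Finset.sum_apply, Pi.zero_apply, Matrix.mulVec, dotProduct] at h2
    rw [Finset.sum_apply, Finset.sum_sigma]
    simpa [smul_eq_mul] using h2

private lemma vanish5 (P : (n : ℕ) → ℝ × ℝ → Fin (n + 1) → ℝ)
    (hli : LinearIndependent ℝ
      (fun p : Σ n : ℕ, Fin (n + 1) => fun xy : ℝ × ℝ => P p.1 xy p.2))
    {r : ℕ} (b : ℕ)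
    (A0 : Matrix (Fin r) (Fin (b + 1)) ℝ) (A1 : Matrix (Fin r) (Fin (b + 2)) ℝ)
    (A2 : Matrix (Fin r) (Fin (b + 3)) ℝ) (A3 : Matrix (Fin r) (Fin (b + 4)) ℝ)
    (A4 : Matrix (Fin r) (Fin (b + 5)) ℝ)
    (h : ∀ x y : ℝ, A0.mulVec (P b (x, y)) + A1.mulVec (P (b + 1) (x, y))
      + A2.mulVec (P (b + 2) (x, y)) + A3.mulVec (P (b + 3) (x, y))
      + A4.mulVec (P (b + 4) (x, y)) = 0) :
    A0 = 0 ∧ A1 = 0 ∧ A2 = 0 ∧ A3 = 0 ∧ A4 = 0 := by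
  classical
  let A : (k : ℕ) → Matrix (Fin r) (Fin (k + 1)) ℝ :=
    Function.update (Function.update (Function.update (Function.update
      (Function.update (fun k => (0 : Matrix (Fin r) (Fin (k + 1)) ℝ)) b A0)
      (b + 1) A1) (b + 2) A2) (b + 3) A3) (b + 4) A4
  have h0 : A b = A0 := by
    unfold A
    rw [Function.update_of_ne (by omega), Function.update_of_ne (by omega),
      Function.update_of_ne (by omega), Function.update_of_ne (by omega),
      Function.update_self]
  have h1 : A (b + 1) = A1 := by
    unfold A
    rw [Function.update_of_ne (by omega), Function.update_of_ne (by omega),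
      Function.update_of_ne (by omega), Function.update_self]
  have h2 : A (b + 2) = A2 := by
    unfold A
    rw [Function.update_of_ne (by omega), Function.update_of_ne (by omega),
      Function.update_self]
  have h3 : A (b + 3) = A3 := by
    unfold A
    rw [Function.update_of_ne (by omega), Function.update_self]
  have h4 : A (b + 4) = A4 := Function.update_self _ _ _
  have hz : ∀ k < b, A k = 0 := by
    intro k hk
    unfold A
    rw [Function.update_of_ne (by omega), Function.update_of_ne (by omega),
      Function.update_of_ne (by omega), Function.update_of_ne (by omega),
      Function.update_of_ne (by omega)]
  have key : ∀ x y : ℝ, ∑ k ∈ Finset.range (b + 5), (A k).mulVec (P k (x, y)) = 0 := by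
    intro x y
    rw [Finset.sum_range_succ, Finset.sum_range_succ, Finset.sum_range_succ,
      Finset.sum_range_succ, Finset.sum_range_succ]
    rw [Finset.sum_eq_zero (fun k hk => by
      rw [hz k (Finset.mem_range.mp hk)]; exact Matrix.zero_mulVec _)]
    rw [h0, h1, h2, h3, h4, zero_add]
    exact h x y
  have E := extract_aux P hli (b + 5) A key
  exact ⟨h0 ▸ E b (by omega), h1 ▸ E (b + 1) (by omega), h2 ▸ E (b + 2) (by omega),
    h3 ▸ E (b + 3) (by omega), h4 ▸ E (b + 4) (by omega)⟩

/-- Commutation relations for the matrix coefficients of the three term relations of a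
bivariate (orthogonal-like) polynomial system. -/
theorem three_term_coefficients_commutation
    (P : (n : ℕ) → ℝ × ℝ → Fin (n + 1) → ℝ)
    (D1 D2 : (n : ℕ) → Matrix (Fin (n + 1)) (Fin (n + 1)) ℝ)
    (C1 C2 : (n : ℕ) → Matrix (Fin (n + 1)) (Fin n) ℝ)
    -- three term relation in the variable `x`, at level `0` (the `C_{0,1} ℙ_{-1}` term vanishes)
    (h3x0 : ∀ x y : ℝ,
      x • P 0 (x, y) = (shiftL1 0).mulVec (P 1 (x, y)) + (D1 0).mulVec (P 0 (x, y)))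
    -- three term relation in the variable `x`, at level `n+1`
    (h3x : ∀ n : ℕ, ∀ x y : ℝ,
      x • P (n + 1) (x, y) = (shiftL1 (n + 1)).mulVec (P (n + 2) (x, y))
        + (D1 (n + 1)).mulVec (P (n + 1) (x, y)) + (C1 (n + 1)).mulVec (P n (x, y)))
    -- three term relation in the variable `y`, at level `0`
    (h3y0 : ∀ x y : ℝ,
      y • P 0 (x, y) = (shiftL2 0).mulVec (P 1 (x, y)) + (D2 0).mulVec (P 0 (x, y)))
    -- three term relation in the variable `y`, at level `n+1`
    (h3y : ∀ n : ℕ, ∀ x y : ℝ,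
      y • P (n + 1) (x, y) = (shiftL2 (n + 1)).mulVec (P (n + 2) (x, y))
        + (D2 (n + 1)).mulVec (P (n + 1) (x, y)) + (C2 (n + 1)).mulVec (P n (x, y)))
    -- the family of all component functions is linearly independent over ℝ
    (hli : LinearIndependent ℝ
      (fun p : Σ n : ℕ, Fin (n + 1) => fun xy : ℝ × ℝ => P p.1 xy p.2)) :
    -- (a) `C_{n,1} C_{n-1,2} = C_{n,2} C_{n-1,1}`  (trivial, `0 = 0`, for `n = 0`)
    (∀ n : ℕ, C1 (n + 1) * C2 n = C2 (n + 1) * C1 n) ∧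
    -- (b) `D_{n,1} C_{n,2} + C_{n,1} D_{n-1,2} = D_{n,2} C_{n,1} + C_{n,2} D_{n-1,1}`;
    -- at `n = 0` the terms `C_{0,i} D_{-1,j}` vanish
    (D1 0 * C2 0 = D2 0 * C1 0) ∧
    (∀ n : ℕ,
      D1 (n + 1) * C2 (n + 1) + C1 (n + 1) * D2 n
        = D2 (n + 1) * C1 (n + 1) + C2 (n + 1) * D1 n) ∧
    -- (c) `L_{n,1} C_{n+1,2} + D_{n,1} D_{n,2} + C_{n,1} L_{n-1,2}
    --        = L_{n,2} C_{n+1,1} + D_{n,2} D_{n,1} + C_{n,2} L_{n-1,1}`;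
    -- at `n = 0` the terms `C_{0,i} L_{-1,j}` vanish
    (shiftL1 0 * C2 1 + D1 0 * D2 0 = shiftL2 0 * C1 1 + D2 0 * D1 0) ∧
    (∀ n : ℕ,
      shiftL1 (n + 1) * C2 (n + 2) + D1 (n + 1) * D2 (n + 1) + C1 (n + 1) * shiftL2 n
        = shiftL2 (n + 1) * C1 (n + 2) + D2 (n + 1) * D1 (n + 1) + C2 (n + 1) * shiftL1 n) ∧
    -- (d) `L_{n,1} D_{n+1,2} + D_{n,1} L_{n,2} = L_{n,2} D_{n+1,1} + D_{n,2} L_{n,1}`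
    (∀ n : ℕ,
      shiftL1 n * D2 (n + 1) + D1 n * shiftL2 n
        = shiftL2 n * D1 (n + 1) + D2 n * shiftL1 n) := by
  have M1 := vanish5 P hli 0
    ((shiftL1 0 * C2 1 + D1 0 * D2 0) - (shiftL2 0 * C1 1 + D2 0 * D1 0))
    ((shiftL1 0 * D2 1 + D1 0 * shiftL2 0) - (shiftL2 0 * D1 1 + D2 0 * shiftL1 0))
    (shiftL1 0 * shiftL2 1 - shiftL2 0 * shiftL1 1)
    0 0
    (by
      intro x y
      have e : y • (x • P 0 (x, y)) = x • (y • P 0 (x, y)) := smul_comm y x _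
      rw [h3x0 x y, h3y0 x y] at e
      simp only [smul_add, ← Matrix.mulVec_smul] at e
      rw [h3x 0 x y, h3x0 x y, h3y 0 x y, h3y0 x y] at e
      simp only [Matrix.mulVec_add, Matrix.mulVec_mulVec] at e
      simp only [Matrix.sub_mulVec, Matrix.add_mulVec, Matrix.zero_mulVec, add_zero]
      linear_combination e)
  have M2 := vanish5 P hli 0
    ((D1 1 * C2 1 + C1 1 * D2 0) - (D2 1 * C1 1 + C2 1 * D1 0))
    ((shiftL1 1 * C2 2 + D1 1 * D2 1 + C1 1 * shiftL2 0)
      - (shiftL2 1 * C1 2 + D2 1 * D1 1 + C2 1 * shiftL1 0))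
    ((shiftL1 1 * D2 2 + D1 1 * shiftL2 1) - (shiftL2 1 * D1 2 + D2 1 * shiftL1 1))
    (shiftL1 1 * shiftL2 2 - shiftL2 1 * shiftL1 2)
    0
    (by
      intro x y
      have e : y • (x • P 1 (x, y)) = x • (y • P 1 (x, y)) := smul_comm y x _
      rw [h3x 0 x y, h3y 0 x y] at e
      simp only [smul_add, ← Matrix.mulVec_smul] at e
      rw [h3x 1 x y, h3x 0 x y, h3x0 x y, h3y 1 x y, h3y 0 x y, h3y0 x y] at e
      simp only [Matrix.mulVec_add, Matrix.mulVec_mulVec] at e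
      simp only [Matrix.sub_mulVec, Matrix.add_mulVec, Matrix.zero_mulVec, add_zero]
      linear_combination e)
  have M3 := fun j : ℕ => vanish5 P hli j
    (C1 (j + 2) * C2 (j + 1) - C2 (j + 2) * C1 (j + 1))
    ((D1 (j + 2) * C2 (j + 2) + C1 (j + 2) * D2 (j + 1))
      - (D2 (j + 2) * C1 (j + 2) + C2 (j + 2) * D1 (j + 1)))
    ((shiftL1 (j + 2) * C2 (j + 3) + D1 (j + 2) * D2 (j + 2) + C1 (j + 2) * shiftL2 (j + 1))
      - (shiftL2 (j + 2) * C1 (j + 3) + D2 (j + 2) * D1 (j + 2) + C2 (j + 2) * shiftL1 (j + 1)))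
    ((shiftL1 (j + 2) * D2 (j + 3) + D1 (j + 2) * shiftL2 (j + 2))
      - (shiftL2 (j + 2) * D1 (j + 3) + D2 (j + 2) * shiftL1 (j + 2)))
    (shiftL1 (j + 2) * shiftL2 (j + 3) - shiftL2 (j + 2) * shiftL1 (j + 3))
    (by
      intro x y
      have e : y • (x • P (j + 2) (x, y)) = x • (y • P (j + 2) (x, y)) := smul_comm y x _
      rw [h3x (j + 1) x y, h3y (j + 1) x y] at e
      simp only [smul_add, ← Matrix.mulVec_smul] at e
      rw [h3x (j + 2) x y, h3x (j + 1) x y, h3x j x y,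
        h3y (j + 2) x y, h3y (j + 1) x y, h3y j x y] at e
      simp only [Matrix.mulVec_add, Matrix.mulVec_mulVec] at e
      simp only [Matrix.sub_mulVec, Matrix.add_mulVec]
      linear_combination e)
  refine ⟨?_, ?_, ?_, ?_, ?_, ?_⟩
  · intro n
    cases n with
    | zero => ext i j; exact j.elim0
    | succ m => exact sub_eq_zero.mp (M3 m).1
  · ext i j; exact j.elim0
  · intro n
    cases n with
    | zero => exact sub_eq_zero.mp M2.1
    | succ m => exact sub_eq_zero.mp (M3 m).2.1
  · exact sub_eq_zero.mp M1.1
  · intro n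
    cases n with
    | zero => exact sub_eq_zero.mp M2.2.1
    | succ m => exact sub_eq_zero.mp (M3 m).2.2.1
  · intro n
    match n with
    | 0 => exact sub_eq_zero.mp M1.2.1
    | 1 => exact sub_eq_zero.mp M2.2.2.1
    | (m + 2) => exact sub_eq_zero.mp (M3 m).2.2.2.1
end

section
/- Suppose that for each n ≥ 0 and each t ∈ ℝ: the vector functions ℙ_n(t) : ℝ² → ℝ^{n+1} satisfy the three-term relations x·ℙ_n(t)(x,y) = L_{n,1} ℙ_{n+1}(t)(x,y) + D_{n,1}(t) ℙ_n(t)(x,y) + C_{n,1}(t) ℙ_{n−1}(t)(x,y) and y·ℙ_n(t)(x,y) = L_{n,2} ℙ_{n+1}(t)(x,y) + D_{n,2}(t) ℙ_n(t)(x,y) + C_{n,2}(t) ℙ_{n−1}(t)(x,y) for all (x,y); the family of component functions {(ℙ_n(t))_j : 0 ≤ j ≤ n, n ≥ 0} is linearly independent over ℝ; every entry of D_{n,i}(t) and C_{n,i}(t) is differentiable in t; and for every (x,y) and n ≥ 1, t ↦ ℙ_n(t)(x,y) is differentiable with ∂_t ℙ_n(t)(x,y) = C_n(t) ℙ_{n−1}(t)(x,y),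 where C_n(t) = C_{n,1}(t) + C_{n,2}(t). Then for i = 1,2 and all n ≥ 1 and all t, the 2D Toda lattice equations hold: Ḋ_{n,i}(t) = C_n(t) L_{n−1,i} − L_{n,i} C_{n+1}(t) and Ċ_{n,i}(t) = C_n(t) D_{n−1,i}(t) − D_{n,i}(t) C_n(t). -/
/-!
Differentiate the relation `x ℙ_n = L_n ℙ_{n+1} + D_n ℙ_n + C_{n,1} ℙ_{n-1}` in `t`, substitute
`∂ₜ ℙ_m = C_m ℙ_{m-1}` and remove `x ℙ_{n-1}` with the relation one level down. This leaves a
linear relation among the components of `ℙ_{n+1}, ℙ_n, ℙ_{n-1}` whose coefficients are the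
differences of the two sides of the Toda equations, so linear independence makes them vanish.
At `n = 1` the derivative of `ℙ_0` is unknown; there `C_{1,i} ℙ_0` is differentiated as a whole
and multiplied by `x - D_{0,i}`, which turns `ℙ_0` into a component of `ℙ_1`. The coefficients
then come multiplied by `L_{n,i}`, which cancels since `L_{n,i} L_{n,i}ᵀ = 1`.
-/

open Matrix

theorem shiftL1_mul_transpose (n : ℕ) : shiftL1 n * (shiftL1 n)ᵀ = 1 := by
  ext i j
  have hk (k : Fin (n + 2)) (i : Fin (n + 1)) : (k : ℕ) = i ↔ k = i.castSucc := by
    simp [Fin.ext_iff]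
  simp [shiftL1, mul_apply, one_apply, hk, eq_comm]

theorem shiftL2_mul_transpose (n : ℕ) : shiftL2 n * (shiftL2 n)ᵀ = 1 := by
  ext i j
  have hk (k : Fin (n + 2)) (i : Fin (n + 1)) : (k : ℕ) = i + 1 ↔ k = i.succ := by
    simp [Fin.ext_iff]
  simp [shiftL2, mul_apply, one_apply, hk, eq_comm]

theorem Matrix.eq_zero_of_mul_eq_zero_of_mul_eq_one {l m n R : Type*} [Fintype m] [Fintype n]
    [DecidableEq m] [Semiring R] {M : Matrix l m R} {A : Matrix m n R} {B : Matrix n m R}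
    (hAB : A * B = 1) (h : M * A = 0) : M = 0 := by
  simpa [Matrix.mul_assoc, hAB] using congrArg (· * B) h

theorem Matrix.mulVec_fin_one {R : Type*} [CommSemiring R] (A : Matrix (Fin 1) (Fin 1) R)
    (v : Fin 1 → R) : A *ᵥ v = A 0 0 • v := by
  ext i
  fin_cases i
  simp [mulVec, dotProduct]

theorem HasDerivAt.matrix_mulVec {𝕜 m n : Type*} [NontriviallyNormedField 𝕜] [Fintype m]
    [Fintype n] {A : 𝕜 → Matrix m n 𝕜} {A' : Matrix m n 𝕜} {v : 𝕜 → n → 𝕜} {v' : n → 𝕜}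
    {t : 𝕜}
    (hA : ∀ i j, HasDerivAt (fun s => A s i j) (A' i j) t) (hv : HasDerivAt v v' t) :
    HasDerivAt (fun s => A s *ᵥ v s) (A' *ᵥ v t + A t *ᵥ v') t := by
  refine hasDerivAt_pi.2 fun i => ?_
  simp only [mulVec, dotProduct, Pi.add_apply, ← Finset.sum_add_distrib]
  exact HasDerivAt.fun_sum fun j _ => (hA i j).mul (hasDerivAt_pi.1 hv j)

theorem HasDerivAt.const_matrix_mulVec {𝕜 m n : Type*} [NontriviallyNormedField 𝕜] [Fintype m]
    [Fintype n] (A : Matrix m n 𝕜) {v : 𝕜 → n → 𝕜} {v' : n → 𝕜} {t : 𝕜}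
    (hv : HasDerivAt v v' t) : HasDerivAt (fun s => A *ᵥ v s) (A *ᵥ v') t := by
  simpa using HasDerivAt.matrix_mulVec (A' := 0) (fun i j => hasDerivAt_const t (A i j)) hv

noncomputable def entrywiseDeriv {m n : Type*} (A : ℝ → Matrix m n ℝ) (t : ℝ) :
    Matrix m n ℝ :=
  Matrix.of fun i j => deriv (fun s => A s i j) t

theorem hasDerivAt_entrywiseDeriv {m n : Type*} {A : ℝ → Matrix m n ℝ} {t : ℝ}
    (hA : ∀ i j, DifferentiableAt ℝ (fun s => A s i j) t) (i : m) (j : n) :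
    HasDerivAt (fun s => A s i j) (entrywiseDeriv A t i j) t :=
  (hA i j).hasDerivAt

theorem eq_zero_of_linearIndependent_levels {X ι R : Type*} [CommRing R]
    {Q : (n : ℕ) → X → Fin (n + 1) → R}
    (hli : LinearIndependent R fun p : Σ n, Fin (n + 1) => fun x => Q p.1 x p.2) (n : ℕ)
    {A : Matrix ι (Fin (n + 3)) R} {B : Matrix ι (Fin (n + 2)) R} {C : Matrix ι (Fin (n + 1)) R}
    (h : ∀ x, A *ᵥ Q (n + 2) x + B *ᵥ Q (n + 1) x + C *ᵥ Q n x = 0) :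
    A = 0 ∧ B = 0 ∧ C = 0 := by
  let mk (m : ℕ) : Fin (m + 1) → Σ m, Fin (m + 1) := fun j => ⟨m, j⟩
  have hmk (m : ℕ) : Function.Injective (mk m) := fun _ _ h => by simpa [mk] using h
  let e := Sum.elim (mk (n + 2)) (Sum.elim (mk (n + 1)) (mk n))
  have he : Function.Injective e := by
    refine (hmk _).sumElim ((hmk _).sumElim (hmk _) ?_) ?_
    · intro a b hab; simpa [mk] using congrArg Sigma.fst hab
    · rintro a (b | b) hab <;> simpa [mk] using congrArg Sigma.fst hab
  have hrow := Fintype.linearIndependent_iff.1 (hli.comp e he)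
  have hzero : ∀ i, ∀ k, Sum.elim (A i) (Sum.elim (B i) (C i)) k = 0 := fun i =>
    hrow _ <| funext fun x => by
      simpa [Fintype.sum_sum_type, e, mulVec, dotProduct, add_assoc] using congrFun (h x) i
  refine ⟨?_, ?_, ?_⟩ <;> ext i j
  exacts [hzero i (.inl j), hzero i (.inr (.inl j)), hzero i (.inr (.inr j))]

section ThreeTermRelation

variable {X : Type*} {P : (n : ℕ) → ℝ → X → Fin (n + 1) → ℝ}
  {Ct : (n : ℕ) → ℝ → Matrix (Fin (n + 1)) (Fin n) ℝ} {coord : X → ℝ}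
  {L : (n : ℕ) → Matrix (Fin (n + 1)) (Fin (n + 2)) ℝ}
  {D : (n : ℕ) → ℝ → Matrix (Fin (n + 1)) (Fin (n + 1)) ℝ}
  {C : (n : ℕ) → ℝ → Matrix (Fin (n + 1)) (Fin n) ℝ}

theorem toda_level_add_two (k : ℕ) (t : ℝ)
    (hrel : ∀ n s x, coord x • P (n + 1) s x =
      L (n + 1) *ᵥ P (n + 2) s x + D (n + 1) s *ᵥ P (n + 1) s x + C (n + 1) s *ᵥ P n s x)
    (hdot : ∀ n s x, HasDerivAt (fun r => P (n + 1) r x) (Ct (n + 1) s *ᵥ P n s x) s)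
    (hD : ∀ i j, DifferentiableAt ℝ (fun s => D (k + 2) s i j) t)
    (hC : ∀ i j, DifferentiableAt ℝ (fun s => C (k + 2) s i j) t)
    (hli : LinearIndependent ℝ fun p : Σ n, Fin (n + 1) => fun x => P p.1 t x p.2) :
    (∀ i j, HasDerivAt (fun s => D (k + 2) s i j)
      ((Ct (k + 2) t * L (k + 1) - L (k + 2) * Ct (k + 3) t) i j) t) ∧
    (∀ i j, HasDerivAt (fun s => C (k + 2) s i j)
      ((Ct (k + 2) t * D (k + 1) t - D (k + 2) t * Ct (k + 2) t) i j) t) := by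
  let D' := entrywiseDeriv (D (k + 2)) t
  let C' := entrywiseDeriv (C (k + 2)) t
  have hcoeffs : ∀ x,
      (Ct (k + 2) t * L (k + 1) - L (k + 2) * Ct (k + 3) t - D') *ᵥ P (k + 2) t x
      + (Ct (k + 2) t * D (k + 1) t - D (k + 2) t * Ct (k + 2) t - C') *ᵥ P (k + 1) t x
      + (Ct (k + 2) t * C (k + 1) t - C (k + 2) t * Ct (k + 1) t) *ᵥ P k t x = 0 := by
    intro x
    have hlhs := (hdot (k + 1) t x).const_smul (coord x)
    have hrhs := (((hdot (k + 2) t x).const_matrix_mulVec (L (k + 2))).add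
      (HasDerivAt.matrix_mulVec (hasDerivAt_entrywiseDeriv hD) (hdot (k + 1) t x))).add
      (HasDerivAt.matrix_mulVec (hasDerivAt_entrywiseDeriv hC) (hdot k t x))
    have heq := hlhs.unique (hrhs.congr_of_eventuallyEq (.of_forall fun s => hrel (k + 1) s x))
    rw [← mulVec_smul, hrel] at heq
    simp only [sub_mulVec, mulVec_add, mulVec_mulVec] at heq ⊢
    rw [← sub_eq_zero] at heq
    convert heq using 1
    abel
  obtain ⟨hD', hC', -⟩ :=
    eq_zero_of_linearIndependent_levels (Q := fun n => P n t) hli k hcoeffs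
  exact ⟨(sub_eq_zero.1 hD').symm ▸ hasDerivAt_entrywiseDeriv hD,
    (sub_eq_zero.1 hC').symm ▸ hasDerivAt_entrywiseDeriv hC⟩

theorem toda_level_one (t : ℝ)
    (hrel0 : ∀ s x, coord x • P 0 s x = L 0 *ᵥ P 1 s x + D 0 s *ᵥ P 0 s x)
    (hrel1 : ∀ s x, coord x • P 1 s x =
      L 1 *ᵥ P 2 s x + D 1 s *ᵥ P 1 s x + C 1 s *ᵥ P 0 s x)
    (hL0 : L 0 * (L 0)ᵀ = 1) (hL1 : L 1 * (L 1)ᵀ = 1)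
    (hdot : ∀ n s x, HasDerivAt (fun r => P (n + 1) r x) (Ct (n + 1) s *ᵥ P n s x) s)
    (hD0 : DifferentiableAt ℝ (fun s => D 0 s 0 0) t)
    (hD : ∀ i j, DifferentiableAt ℝ (fun s => D 1 s i j) t)
    (hC : ∀ i j, DifferentiableAt ℝ (fun s => C 1 s i j) t)
    (hli : LinearIndependent ℝ fun p : Σ n, Fin (n + 1) => fun x => P p.1 t x p.2) :
    (∀ i j, HasDerivAt (fun s => D 1 s i j) ((Ct 1 t * L 0 - L 1 * Ct 2 t) i j) t) ∧
    (∀ i j, HasDerivAt (fun s => C 1 s i j) ((Ct 1 t * D 0 t - D 1 t * Ct 1 t) i j) t) := by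
  let D' := entrywiseDeriv (D 1) t
  let C' := entrywiseDeriv (C 1) t
  let M := Ct 1 t * L 0 - L 1 * Ct 2 t - D'
  let N := Ct 1 t * D 0 t - D 1 t * Ct 1 t
  have hG (x : X) :
      HasDerivAt (fun s => C 1 s *ᵥ P 0 s x) (M *ᵥ P 1 t x + N *ᵥ P 0 t x) t := by
    have hfun (s : ℝ) : C 1 s *ᵥ P 0 s x =
        coord x • P 1 s x - L 1 *ᵥ P 2 s x - D 1 s *ᵥ P 1 s x := by
      rw [hrel1]; abel
    have hderiv := (((hdot 0 t x).const_smul (coord x)).sub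
      ((hdot 1 t x).const_matrix_mulVec (L 1))).sub
      (HasDerivAt.matrix_mulVec (hasDerivAt_entrywiseDeriv hD) (hdot 0 t x))
    refine (hderiv.congr_of_eventuallyEq (.of_forall hfun)).congr_deriv ?_
    rw [← mulVec_smul, hrel0]
    simp only [M, N, sub_mulVec, mulVec_add, mulVec_mulVec]
    abel
  -- `∂ₜ ℙ_0` is unknown: differentiate `C_1 L_0 ℙ_1 = (x - D_0) C_1 ℙ_0` both ways instead.
  have hL0P (s : ℝ) (x : X) : L 0 *ᵥ P 1 s x = (coord x - D 0 s 0 0) • P 0 s x := by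
    rw [sub_smul, hrel0, mulVec_fin_one]; abel
  have hcoeffs (x : X) : (M * L 1) *ᵥ P 2 t x
      + (M * D 1 t - D 0 t 0 0 • M + (N - C') * L 0) *ᵥ P 1 t x
      + (M * C 1 t + N * D 0 t - D 0 t 0 0 • N - deriv (fun s => D 0 s 0 0) t • C 1 t
        - C 1 t * L 0 * Ct 1 t) *ᵥ P 0 t x = 0 := by
    have hH := HasDerivAt.matrix_mulVec (hasDerivAt_entrywiseDeriv hC)
      ((hdot 0 t x).const_matrix_mulVec (L 0))
    have hH' := (((hasDerivAt_const t (coord x)).sub hD0.hasDerivAt).smul (hG x))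
    have heq := hH.unique (hH'.congr_of_eventuallyEq (.of_forall fun s => by
      simp only [hL0P, mulVec_smul, Pi.smul_apply', Pi.sub_apply]))
    simp only [Pi.sub_apply, zero_sub, neg_smul] at heq
    rw [sub_smul, smul_add, ← mulVec_smul M, ← mulVec_smul N, hrel1, hrel0] at heq
    simp only [mulVec_add, sub_mulVec, add_mulVec, smul_mulVec, mulVec_mulVec, smul_add,
      Matrix.sub_mul, Matrix.mul_assoc, C'] at heq ⊢
    rw [eq_comm, ← sub_eq_zero] at heq
    convert heq using 1
    abel
  obtain ⟨hML, hP1, -⟩ :=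
    eq_zero_of_linearIndependent_levels (Q := fun n => P n t) hli 0 hcoeffs
  have hM : M = 0 := eq_zero_of_mul_eq_zero_of_mul_eq_one hL1 hML
  have hN : N - C' = 0 := eq_zero_of_mul_eq_zero_of_mul_eq_one hL0 (by simpa [hM] using hP1)
  have hC' : entrywiseDeriv (C 1) t = Ct 1 t * D 0 t - D 1 t * Ct 1 t := (sub_eq_zero.1 hN).symm
  exact ⟨(sub_eq_zero.1 hM).symm ▸ hasDerivAt_entrywiseDeriv hD,
    hC' ▸ hasDerivAt_entrywiseDeriv hC⟩

end ThreeTermRelation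

/-- If the monic OPS evolves by `∂_t ℙ_n = C_n ℙ_{n−1}` then the coefficients of the three
term relations satisfy the 2D Toda lattice
`Ḋ_{n,i} = C_n L_{n−1,i} − L_{n,i} C_{n+1}` and `Ċ_{n,i} = C_n D_{n−1,i} − D_{n,i} C_n`
(stated for `n ≥ 1`, i.e. at index `n + 1` for `n : ℕ`). -/
theorem toda_lattice_of_dot_P
    (P : (n : ℕ) → ℝ → ℝ × ℝ → Fin (n + 1) → ℝ)
    (D1 D2 : (n : ℕ) → ℝ → Matrix (Fin (n + 1)) (Fin (n + 1)) ℝ)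
    (C1 C2 : (n : ℕ) → ℝ → Matrix (Fin (n + 1)) (Fin n) ℝ)
    -- three term relation in the variable `x`, at level `0` (the `C_{0,1} ℙ_{-1}` term vanishes)
    (h3x0 : ∀ (t : ℝ) (x y : ℝ),
      x • P 0 t (x, y) = (shiftL1 0).mulVec (P 1 t (x, y)) + (D1 0 t).mulVec (P 0 t (x, y)))
    -- three term relation in the variable `x`, at level `n+1`
    (h3x : ∀ (n : ℕ) (t : ℝ) (x y : ℝ),
      x • P (n + 1) t (x, y) = (shiftL1 (n + 1)).mulVec (P (n + 2) t (x, y))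
        + (D1 (n + 1) t).mulVec (P (n + 1) t (x, y)) + (C1 (n + 1) t).mulVec (P n t (x, y)))
    -- three term relation in the variable `y`, at level `0`
    (h3y0 : ∀ (t : ℝ) (x y : ℝ),
      y • P 0 t (x, y) = (shiftL2 0).mulVec (P 1 t (x, y)) + (D2 0 t).mulVec (P 0 t (x, y)))
    -- three term relation in the variable `y`, at level `n+1`
    (h3y : ∀ (n : ℕ) (t : ℝ) (x y : ℝ),
      y • P (n + 1) t (x, y) = (shiftL2 (n + 1)).mulVec (P (n + 2) t (x, y))
        + (D2 (n + 1) t).mulVec (P (n + 1) t (x, y)) + (C2 (n + 1) t).mulVec (P n t (x, y)))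
    -- for each `t`, the family of all component functions is linearly independent over ℝ
    (hli : ∀ t : ℝ, LinearIndependent ℝ
      (fun p : Σ n : ℕ, Fin (n + 1) => fun xy : ℝ × ℝ => P p.1 t xy p.2))
    -- every entry of `D_{n,i}(t)` and `C_{n,i}(t)` is differentiable in `t`
    (hD1 : ∀ (n : ℕ) i j, Differentiable ℝ (fun t => D1 n t i j))
    (hD2 : ∀ (n : ℕ) i j, Differentiable ℝ (fun t => D2 n t i j))
    (hC1 : ∀ (n : ℕ) i j, Differentiable ℝ (fun t => C1 n t i j))
    (hC2 : ∀ (n : ℕ) i j, Differentiable ℝ (fun t => C2 n t i j))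
    -- evolution of the polynomials: `∂_t ℙ_n = C_n ℙ_{n−1}` for `n ≥ 1`,
    -- where `C_n = C_{n,1} + C_{n,2}`
    (hdotP : ∀ (n : ℕ) (x y : ℝ) (t : ℝ) (j : Fin (n + 2)),
      HasDerivAt (fun s => P (n + 1) s (x, y) j)
        (((C1 (n + 1) t + C2 (n + 1) t).mulVec (P n t (x, y))) j) t) :
    ∀ (n : ℕ) (t : ℝ),
      -- `Ḋ_{n+1,i}(t) = C_{n+1}(t) L_{n,i} − L_{n+1,i} C_{n+2}(t)`
      (∀ i j, HasDerivAt (fun s => D1 (n + 1) s i j)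
        (((C1 (n + 1) t + C2 (n + 1) t) * shiftL1 n
          - shiftL1 (n + 1) * (C1 (n + 2) t + C2 (n + 2) t)) i j) t) ∧
      (∀ i j, HasDerivAt (fun s => D2 (n + 1) s i j)
        (((C1 (n + 1) t + C2 (n + 1) t) * shiftL2 n
          - shiftL2 (n + 1) * (C1 (n + 2) t + C2 (n + 2) t)) i j) t) ∧
      -- `Ċ_{n+1,i}(t) = C_{n+1}(t) D_{n,i}(t) − D_{n+1,i}(t) C_{n+1}(t)`
      (∀ i j, HasDerivAt (fun s => C1 (n + 1) s i j)
        (((C1 (n + 1) t + C2 (n + 1) t) * D1 n t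
          - D1 (n + 1) t * (C1 (n + 1) t + C2 (n + 1) t)) i j) t) ∧
      (∀ i j, HasDerivAt (fun s => C2 (n + 1) s i j)
        (((C1 (n + 1) t + C2 (n + 1) t) * D2 n t
          - D2 (n + 1) t * (C1 (n + 1) t + C2 (n + 1) t)) i j) t) := by
  intro n t
  let Ct (m : ℕ) (s : ℝ) := C1 m s + C2 m s
  have hdot (m : ℕ) (s : ℝ) (xy : ℝ × ℝ) :
      HasDerivAt (fun r => P (m + 1) r xy) (Ct (m + 1) s *ᵥ P m s xy) s :=
    hasDerivAt_pi.2 (hdotP m xy.1 xy.2 s)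
  cases n with
  | zero =>
    have hx := toda_level_one (coord := Prod.fst) t (fun s xy => h3x0 s xy.1 xy.2)
      (fun s xy => h3x 0 s xy.1 xy.2) (shiftL1_mul_transpose 0) (shiftL1_mul_transpose 1) hdot
      (hD1 0 0 0 t) (fun i j => hD1 1 i j t) (fun i j => hC1 1 i j t) (hli t)
    have hy := toda_level_one (coord := Prod.snd) t (fun s xy => h3y0 s xy.1 xy.2)
      (fun s xy => h3y 0 s xy.1 xy.2) (shiftL2_mul_transpose 0) (shiftL2_mul_transpose 1) hdot
      (hD2 0 0 0 t) (fun i j => hD2 1 i j t) (fun i j => hC2 1 i j t) (hli t)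
    exact ⟨hx.1, hy.1, hx.2, hy.2⟩
  | succ k =>
    have hx := toda_level_add_two (coord := Prod.fst) k t (fun n s xy => h3x n s xy.1 xy.2)
      hdot (fun i j => hD1 (k + 2) i j t) (fun i j => hC1 (k + 2) i j t) (hli t)
    have hy := toda_level_add_two (coord := Prod.snd) k t (fun n s xy => h3y n s xy.1 xy.2)
      hdot (fun i j => hD2 (k + 2) i j t) (fun i j => hC2 (k + 2) i j t) (hli t)
    exact ⟨hx.1, hy.1, hx.2, hy.2⟩
end

section
/- Let N ≥ 1, let A : ℝ → M_N(ℂ) be continuous and let J : ℝ → M_N(ℂ) be differentiable with J̇(t) = A(t)·J(t) − J(t)·A(t) for every t ∈ ℝ (a Lax pair). Then the characteristic polynomial of J(t) is independent of t: for all t ∈ ℝ, charpoly(J(t)) = charpoly(J(0)); in particular the eigenvalues of J(t) do not depend on t (the flow is isospectral). -/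
/-!
By Jacobi's formula, `d/dt det (x - J t) = -tr (adj (x - J t) * (A t * J t - J t * A t))`.
Since `adj (x - J t)` commutes with `J t`, cyclicity of the trace makes this vanish, so every
value `(J t).charpoly.eval x` is constant in `t`; over the infinite field `ℂ` a polynomial is
determined by its values.
-/

open Matrix

namespace Matrix

variable {n : Type*} [Fintype n]

theorem trace_mul_commutator_eq_zero {R : Type*} [CommRing R] {B J : Matrix n n R}
    (h : Commute B J) (A : Matrix n n R) :
    trace (B * (A * J - J * A)) = 0 := by
  have hBAJ : trace (B * (A * J)) = trace (B * (J * A)) := by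
    rw [← Matrix.mul_assoc, trace_mul_comm, ← Matrix.mul_assoc, ← Matrix.mul_assoc, h.eq]
  rw [mul_sub, trace_sub, hBAJ, sub_self]

variable [DecidableEq n]

theorem prod_updateCol_apply {R : Type*} [CommRing R] (M : Matrix n n R) (i : n)
    (c : n → R) (g : n → n) :
    ∏ j, M.updateCol i c (g j) j = c (g i) * ∏ j ∈ Finset.univ.erase i, M (g j) j := by
  rw [← Finset.mul_prod_erase _ _ (Finset.mem_univ i), updateCol_self]
  congr 1
  refine Finset.prod_congr rfl fun j hj => ?_
  rw [updateCol_ne (Finset.ne_of_mem_erase hj)]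

theorem trace_adjugate_mul {R : Type*} [CommRing R] (M M' : Matrix n n R) :
    trace (adjugate M * M') = ∑ i, (M.updateCol i fun k => M' k i).det := by
  simp_rw [← cramer_apply, cramer_eq_adjugate_mulVec]
  simp [trace, mul_apply, mulVec, dotProduct]

theorem hasDerivAt_det {𝕜 R : Type*} [NontriviallyNormedField 𝕜] [NormedCommRing R]
    [NormedAlgebra 𝕜 R] {F : 𝕜 → Matrix n n R} {F' : Matrix n n R} {t : 𝕜}
    (hF : ∀ i j, HasDerivAt (fun s => F s i j) (F' i j) t) :
    HasDerivAt (fun s => (F s).det) (trace (adjugate (F t) * F')) t := by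
  rw [trace_adjugate_mul]
  simp_rw [det_apply', prod_updateCol_apply]
  rw [Finset.sum_comm]
  refine HasDerivAt.fun_sum fun σ _ => ?_
  simpa only [Finset.mul_sum, Finset.sum_mul, smul_eq_mul, mul_comm] using
    (HasDerivAt.fun_finsetProd (u := Finset.univ) fun i _ => hF (σ i) i).const_mul
      ((Equiv.Perm.sign σ : ℤ) : R)

theorem commute_adjugate_self {R : Type*} [CommRing R] (M : Matrix n n R) :
    Commute (adjugate M) M := by
  rw [Commute, SemiconjBy, adjugate_mul, mul_adjugate]

end Matrix

theorem hasDerivAt_eval_charpoly_of_lax {𝕜 R n : Type*} [NontriviallyNormedField 𝕜]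
    [NormedCommRing R] [NormedAlgebra 𝕜 R] [Fintype n] [DecidableEq n]
    {J : 𝕜 → Matrix n n R} {A : Matrix n n R} {t : 𝕜}
    (hJ : ∀ i j, HasDerivAt (fun s => J s i j) ((A * J t - J t * A) i j) t) (x : R) :
    HasDerivAt (fun s => (J s).charpoly.eval x) 0 t := by
  simp_rw [eval_charpoly]
  have hderiv : ∀ i j, HasDerivAt (fun s => (scalar n x - J s) i j)
      ((-(A * J t - J t * A)) i j) t := fun i j => by
    simpa using (hJ i j).const_sub (scalar n x i j)
  have hcomm : Commute (adjugate (scalar n x - J t)) (J t) := by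
    have hscalar := (scalar_commute x (Commute.all x) (adjugate (scalar n x - J t))).symm
    simpa using hscalar.sub_right (commute_adjugate_self (scalar n x - J t))
  simpa only [mul_neg, trace_neg, trace_mul_commutator_eq_zero hcomm, neg_zero] using
    hasDerivAt_det hderiv

theorem lax_pair_isospectral_general (N : ℕ)
    (A J : ℝ → Matrix (Fin N) (Fin N) ℂ)
    (hJ : ∀ (t : ℝ) (i j : Fin N),
      HasDerivAt (fun s => J s i j) ((A t * J t - J t * A t) i j) t) :
    ∀ t : ℝ, (J t).charpoly = (J 0).charpoly := by
  intro t
  refine Polynomial.funext fun x => ?_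
  have hconst := fun s => hasDerivAt_eval_charpoly_of_lax (hJ s) x
  exact is_const_of_deriv_eq_zero (fun s => (hconst s).differentiableAt)
    (fun s => (hconst s).deriv) t 0

/-- A Lax pair flow `J̇ = A·J − J·A` on complex `N × N` matrices is isospectral:
the characteristic polynomial of `J(t)` is independent of `t`. -/
theorem lax_pair_isospectral (N : ℕ) (hN : 1 ≤ N)
    (A J : ℝ → Matrix (Fin N) (Fin N) ℂ)
    (hA : ∀ i j, Continuous fun t => A t i j)
    (hJ : ∀ (t : ℝ) (i j : Fin N),
      HasDerivAt (fun s => J s i j) ((A t * J t - J t * A t) i j) t) :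
    ∀ t : ℝ, (J t).charpoly = (J 0).charpoly :=
  lax_pair_isospectral_general N A J hJ
end

section
/- Let Ω ⊆ ℝ² be a compact measurable set and w : ℝ² → ℝ integrable on Ω. Let z₁, z₂ ∈ ℂ satisfy |z₁| > sup{|x| : (x,y) ∈ Ω} and |z₂| > sup{|y| : (x,y) ∈ Ω}. Then the double series Σ_{(h,k)∈ℕ×ℕ} ω_{h,k}/(z₁^{h+1} z₂^{k+1}) is (absolutely) summable, where ω_{h,k} = ∫_Ω x^h y^k w(x,y) dx dy, and its sum equals the Stieltjes function: ∫_Ω w(x,y)/((z₁ − x)(z₂ − y)) dx dy = Σ_{(h,k)∈ℕ×ℕ} ω_{h,k}/(z₁^{h+1} z₂^{k+1}). -/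
/-!
Write `M₁ = sup_Ω |x|` and `M₂ = sup_Ω |y|`. On `Ω` the kernel `1 / ((z₁ - x)(z₂ - y))` is the
product of two geometric series, and its `(h, k)` term is bounded uniformly by
`M₁^h M₂^k / (|z₁|^{h+1} |z₂|^{k+1})`, the term of a convergent series. Times the integrable
weight `w` this is a summable domination, so the double series may be integrated term by term,
and the `(h, k)` term integrates to `ω_{h,k} / (z₁^{h+1} z₂^{k+1})`.
-/

open MeasureTheory Set

theorem IsCompact.le_sSup_image {X : Type*} [TopologicalSpace X] {K : Set X} (hK : IsCompact K)
    {f : X → ℝ} (hf : ContinuousOn f K) {x : X} (hx : x ∈ K) : f x ≤ sSup (f '' K) :=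
  le_csSup (hK.image_of_continuousOn hf).bddAbove (mem_image_of_mem f hx)

section Geometric

variable {K : Type*} [NormedField K]

theorem hasSum_pow_div_pow_succ {x z : K} (h : ‖x‖ < ‖z‖) :
    HasSum (fun n : ℕ => x ^ n / z ^ (n + 1)) (z - x)⁻¹ := by
  have hz : z ≠ 0 := norm_pos_iff.mp ((norm_nonneg x).trans_lt h)
  have hzx : z - x ≠ 0 := sub_ne_zero.mpr fun e => h.ne (e ▸ rfl)
  have hq : ‖x / z‖ < 1 := by rwa [norm_div, div_lt_one (norm_pos_iff.mpr hz)]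
  convert (hasSum_geometric_of_norm_lt_one hq).div_const z using 1
  · ext n
    rw [div_pow, pow_succ, div_div]
  · field_simp

theorem norm_pow_div_pow_succ_le {x z : K} {r : ℝ} (hx : ‖x‖ ≤ r) (n : ℕ) :
    ‖x ^ n / z ^ (n + 1)‖ ≤ r ^ n / ‖z‖ ^ (n + 1) := by
  rw [norm_div, norm_pow, norm_pow]
  exact div_le_div_of_nonneg_right (pow_le_pow_left₀ (norm_nonneg x) hx n) (by positivity)

theorem summable_norm_pow_div_pow_succ {x z : K} (h : ‖x‖ < ‖z‖) :
    Summable fun n : ℕ => ‖x ^ n / z ^ (n + 1)‖ := by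
  have h' : ‖‖x‖‖ < ‖‖z‖‖ := by rwa [norm_norm, norm_norm]
  exact .of_nonneg_of_le (fun _ => norm_nonneg _) (norm_pow_div_pow_succ_le le_rfl)
    (hasSum_pow_div_pow_succ h').summable

theorem hasSum_prod_pow_div_pow_succ {x₁ x₂ z₁ z₂ : K} (h₁ : ‖x₁‖ < ‖z₁‖) (h₂ : ‖x₂‖ < ‖z₂‖) :
    HasSum (fun hk : ℕ × ℕ => x₁ ^ hk.1 / z₁ ^ (hk.1 + 1) * (x₂ ^ hk.2 / z₂ ^ (hk.2 + 1)))
      ((z₁ - x₁)⁻¹ * (z₂ - x₂)⁻¹) := by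
  have hs₁ := hasSum_pow_div_pow_succ h₁
  have hs₂ := hasSum_pow_div_pow_succ h₂
  have hs := summable_mul_of_summable_norm' (R := K) (summable_norm_pow_div_pow_succ h₁)
    hs₁.summable (summable_norm_pow_div_pow_succ h₂) hs₂.summable
  -- `(_ :)` elaborates the product first; unifying it against the goal directly is very slow.
  exact (hs₁.mul hs₂ hs :)

end Geometric

theorem hasSum_integral_mul_of_norm_le {α E ι : Type*} [MeasurableSpace α] {μ : Measure α}
    [NormedRing E] [NormedSpace ℝ E] [Countable ι] {w : α → E} (hw : Integrable w μ)
    {g : ι → α → E} {G : α → E} {c : ι → ℝ} (hg : ∀ n, AEStronglyMeasurable (g n) μ)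
    (hc : Summable c) (hgc : ∀ n, ∀ᵐ a ∂μ, ‖g n a‖ ≤ c n)
    (hG : ∀ᵐ a ∂μ, HasSum (fun n => g n a) (G a)) :
    HasSum (fun n => ∫ a, w a * g n a ∂μ) (∫ a, w a * G a ∂μ) := by
  refine hasSum_integral_of_dominated_convergence (fun n a => ‖w a‖ * c n)
    (fun n => hw.aestronglyMeasurable.mul (hg n)) (fun n => ?_)
    (.of_forall fun a => hc.mul_left _) ?_ (hG.mono fun a h => h.mul_left (w a))
  · filter_upwards [hgc n] with a ha
    exact (norm_mul_le _ _).trans (mul_le_mul_of_nonneg_left ha (norm_nonneg _))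
  · simpa only [tsum_mul_left] using hw.norm.mul_const (∑' n, c n)

theorem hasSum_integral_mul_inv_sub_mul_inv_sub {α 𝕜 : Type*} [MeasurableSpace α]
    {μ : Measure α} [RCLike 𝕜] {w x₁ x₂ : α → 𝕜} {z₁ z₂ : 𝕜} {r₁ r₂ : ℝ}
    (hw : Integrable w μ) (hx₁ : AEStronglyMeasurable x₁ μ) (hx₂ : AEStronglyMeasurable x₂ μ)
    (hr₁ : 0 ≤ r₁) (hr₂ : 0 ≤ r₂) (hrz₁ : r₁ < ‖z₁‖) (hrz₂ : r₂ < ‖z₂‖)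
    (hxr₁ : ∀ᵐ a ∂μ, ‖x₁ a‖ ≤ r₁) (hxr₂ : ∀ᵐ a ∂μ, ‖x₂ a‖ ≤ r₂) :
    HasSum (fun hk : ℕ × ℕ =>
        ∫ a, w a * (x₁ a ^ hk.1 / z₁ ^ (hk.1 + 1) * (x₂ a ^ hk.2 / z₂ ^ (hk.2 + 1))) ∂μ)
      (∫ a, w a * ((z₁ - x₁ a)⁻¹ * (z₂ - x₂ a)⁻¹) ∂μ) := by
  have hnorm {r : ℝ} {z : 𝕜} (hr : 0 ≤ r) (hrz : r < ‖z‖) : ‖r‖ < ‖‖z‖‖ := by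
    rwa [norm_norm, Real.norm_of_nonneg hr]
  refine hasSum_integral_mul_of_norm_le hw (fun hk => ?_)
    (hasSum_prod_pow_div_pow_succ (hnorm hr₁ hrz₁) (hnorm hr₂ hrz₂)).summable (fun hk => ?_) ?_
  · fun_prop
  · filter_upwards [hxr₁, hxr₂] with a ha₁ ha₂
    rw [norm_mul]
    exact mul_le_mul (norm_pow_div_pow_succ_le ha₁ _) (norm_pow_div_pow_succ_le ha₂ _)
      (norm_nonneg _) (by positivity)
  · filter_upwards [hxr₁, hxr₂] with a ha₁ ha₂
    exact hasSum_prod_pow_div_pow_succ (ha₁.trans_lt hrz₁) (ha₂.trans_lt hrz₂)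

theorem stieltjes_eq_moment_series_general (Ω : Set (ℝ × ℝ)) (w : ℝ × ℝ → ℝ)
    (hΩc : IsCompact Ω)
    (hw : IntegrableOn w Ω)
    (z₁ z₂ : ℂ)
    (hz₁ : sSup ((fun p : ℝ × ℝ => |p.1|) '' Ω) < ‖z₁‖)
    (hz₂ : sSup ((fun p : ℝ × ℝ => |p.2|) '' Ω) < ‖z₂‖) :
    Summable (fun hk : ℕ × ℕ =>
      (((∫ p in Ω, p.1 ^ hk.1 * p.2 ^ hk.2 * w p) : ℝ) : ℂ)
        / (z₁ ^ (hk.1 + 1) * z₂ ^ (hk.2 + 1))) ∧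
    (∫ p in Ω, ((w p : ℝ) : ℂ) / ((z₁ - (p.1 : ℂ)) * (z₂ - (p.2 : ℂ))))
      = ∑' hk : ℕ × ℕ,
          (((∫ p in Ω, p.1 ^ hk.1 * p.2 ^ hk.2 * w p) : ℝ) : ℂ)
            / (z₁ ^ (hk.1 + 1) * z₂ ^ (hk.2 + 1)) := by
  set M₁ := sSup ((fun p : ℝ × ℝ => |p.1|) '' Ω)
  set M₂ := sSup ((fun p : ℝ × ℝ => |p.2|) '' Ω)
  have hΩ₁ : ∀ p ∈ Ω, ‖(p.1 : ℂ)‖ ≤ M₁ := fun p hp => by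
    simpa using hΩc.le_sSup_image (f := fun p : ℝ × ℝ => |p.1|) (by fun_prop) hp
  have hΩ₂ : ∀ p ∈ Ω, ‖(p.2 : ℂ)‖ ≤ M₂ := fun p hp => by
    simpa using hΩc.le_sSup_image (f := fun p : ℝ × ℝ => |p.2|) (by fun_prop) hp
  have hM₁ : 0 ≤ M₁ := Real.sSup_nonneg (by rintro _ ⟨p, -, rfl⟩; exact abs_nonneg _)
  have hM₂ : 0 ≤ M₂ := Real.sSup_nonneg (by rintro _ ⟨p, -, rfl⟩; exact abs_nonneg _)
  have hmoment : ∀ hk : ℕ × ℕ,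
      ∫ p in Ω, (w p : ℂ) *
          ((p.1 : ℂ) ^ hk.1 / z₁ ^ (hk.1 + 1) * ((p.2 : ℂ) ^ hk.2 / z₂ ^ (hk.2 + 1)))
        = (((∫ p in Ω, p.1 ^ hk.1 * p.2 ^ hk.2 * w p) : ℝ) : ℂ)
          / (z₁ ^ (hk.1 + 1) * z₂ ^ (hk.2 + 1)) := by
    intro hk
    calc _ = ∫ p in Ω, ((p.1 ^ hk.1 * p.2 ^ hk.2 * w p : ℝ) : ℂ) /
            (z₁ ^ (hk.1 + 1) * z₂ ^ (hk.2 + 1)) :=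
          integral_congr_ae (.of_forall fun p => by push_cast; ring)
      _ = _ := by rw [integral_div]; exact congrArg (· / _) integral_ofReal
  have hseries := hasSum_integral_mul_inv_sub_mul_inv_sub (μ := volume.restrict Ω)
    (w := fun p => (w p : ℂ)) hw.ofReal (by fun_prop) (by fun_prop) hM₁ hM₂ hz₁ hz₂
    ((ae_restrict_mem hΩc.measurableSet).mono hΩ₁) ((ae_restrict_mem hΩc.measurableSet).mono hΩ₂)
  simp only [hmoment] at hseries
  simpa only [div_eq_mul_inv, mul_inv] using And.intro hseries.summable hseries.tsum_eq.symm

/-- For `|z₁|` and `|z₂|` beyond the support, the Stieltjes function of a weight on a compact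
set `Ω ⊆ ℝ²` is the sum of the (absolutely summable) double moment series
`Σ_{h,k} ω_{h,k}/(z₁^{h+1} z₂^{k+1})`. -/
theorem stieltjes_eq_moment_series (Ω : Set (ℝ × ℝ)) (w : ℝ × ℝ → ℝ)
    (hΩc : IsCompact Ω) (hΩm : MeasurableSet Ω)
    (hw : IntegrableOn w Ω)
    (z₁ z₂ : ℂ)
    (hz₁ : sSup ((fun p : ℝ × ℝ => |p.1|) '' Ω) < ‖z₁‖)
    (hz₂ : sSup ((fun p : ℝ × ℝ => |p.2|) '' Ω) < ‖z₂‖) :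
    Summable (fun hk : ℕ × ℕ =>
      (((∫ p in Ω, p.1 ^ hk.1 * p.2 ^ hk.2 * w p) : ℝ) : ℂ)
        / (z₁ ^ (hk.1 + 1) * z₂ ^ (hk.2 + 1))) ∧
    (∫ p in Ω, ((w p : ℝ) : ℂ) / ((z₁ - (p.1 : ℂ)) * (z₂ - (p.2 : ℂ))))
      = ∑' hk : ℕ × ℕ,
          (((∫ p in Ω, p.1 ^ hk.1 * p.2 ^ hk.2 * w p) : ℝ) : ℂ)
            / (z₁ ^ (hk.1 + 1) * z₂ ^ (hk.2 + 1)) :=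
  stieltjes_eq_moment_series_general Ω w hΩc hw z₁ z₂ hz₁ hz₂
end

section
/- Let Ω ⊆ ℝ² be a compact measurable set and let ω : ℝ² × ℝ → ℝ be continuous with ∫_Ω ω(x,y,t) dx dy = 1 for all t ∈ ℝ, and suppose that for every (x,y) ∈ Ω and every t the map t ↦ ω(x,y,t) is differentiable with ∂_t ω(x,y,t) = −(x + y − D₀(t))·ω(x,y,t), where D₀(t) = ∫_Ω (x+y) ω(x,y,t) dx dy is continuous in t. Then the weight is given explicitly by ω(x,y,t) = e^{−(x+y)t} ω(x,y,0) / ∫_Ω e^{−(x'+y')t} ω(x',y',0) dx' dy' for all (x,y) ∈ Ω and t ∈ ℝ. -/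
open MeasureTheory

/-!
Along each fibre the equation is the scalar linear ODE `ω' = (D₀(t) − (x + y)) ω`, so with
`E(t) = ∫₀ᵗ D₀` we get `ω(x,y,t) = e^{E(t)} e^{−(x+y)t} ω(x,y,0)`. Integrating over `Ω` and using
the normalization identifies the unknown factor `e^{E(t)}` as the inverse of the denominator.
-/

theorem eq_mul_exp_of_hasDerivAt_mul {f a A : ℝ → ℝ}
    (hf : ∀ t, HasDerivAt f (a t * f t) t) (hA : ∀ t, HasDerivAt A (a t) t) (t : ℝ) :
    f t = Real.exp (A t - A 0) * f 0 := by
  have hderiv : ∀ s, HasDerivAt (fun s => f s * Real.exp (-A s)) 0 s := fun s =>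
    ((hf s).fun_mul (hA s).fun_neg.exp).congr_deriv (by ring)
  have hconst : f t * Real.exp (-A t) = f 0 * Real.exp (-A 0) :=
    is_const_of_deriv_eq_zero (fun s => (hderiv s).differentiableAt)
      (fun s => (hderiv s).deriv) t 0
  calc f t = f t * Real.exp (-A t) * Real.exp (A t) := by
        rw [mul_assoc, ← Real.exp_add, neg_add_cancel, Real.exp_zero, mul_one]
    _ = Real.exp (A t - A 0) * f 0 := by
        rw [hconst, sub_eq_add_neg, Real.exp_add]
        ring

theorem weight_representation_general (Ω : Set (ℝ × ℝ)) (ω : ℝ × ℝ → ℝ → ℝ)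
    (hΩm : MeasurableSet Ω)
    (hnorm : ∀ t : ℝ, (∫ p in Ω, ω p t) = 1)
    (hD₀cont : Continuous fun t : ℝ => ∫ p in Ω, (p.1 + p.2) * ω p t)
    (hode : ∀ p ∈ Ω, ∀ t : ℝ,
      HasDerivAt (fun s => ω p s)
        (-(p.1 + p.2 - ∫ q in Ω, (q.1 + q.2) * ω q t) * ω p t) t) :
    ∀ p ∈ Ω, ∀ t : ℝ,
      ω p t = Real.exp (-(p.1 + p.2) * t) * ω p 0
        / ∫ q in Ω, Real.exp (-(q.1 + q.2) * t) * ω q 0 := by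
  set E : ℝ → ℝ := fun t => ∫ s in (0 : ℝ)..t, ∫ q in Ω, (q.1 + q.2) * ω q s
  have hsol : ∀ p ∈ Ω, ∀ t, ω p t = Real.exp (E t) * (Real.exp (-(p.1 + p.2) * t) * ω p 0) := by
    intro p hp t
    have hA : ∀ s, HasDerivAt (fun s => E s - (p.1 + p.2) * s)
        (-(p.1 + p.2 - ∫ q in Ω, (q.1 + q.2) * ω q s)) s := fun s =>
      ((hD₀cont.integral_hasStrictDerivAt 0 s).hasDerivAt.fun_sub
        ((hasDerivAt_id' s).const_mul (p.1 + p.2))).congr_deriv (by ring)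
    have hE0 : E 0 = 0 := intervalIntegral.integral_same
    rw [eq_mul_exp_of_hasDerivAt_mul (hode p hp) hA t, hE0, ← mul_assoc, ← Real.exp_add]
    congr 2
    ring
  intro p hp t
  have hden : (∫ q in Ω, Real.exp (-(q.1 + q.2) * t) * ω q 0) = Real.exp (-E t) := by
    have hpoint : ∀ q ∈ Ω, Real.exp (-(q.1 + q.2) * t) * ω q 0 = Real.exp (-E t) * ω q t := by
      intro q hq
      rw [hsol q hq t, ← mul_assoc, ← Real.exp_add, neg_add_cancel, Real.exp_zero, one_mul]
    rw [setIntegral_congr_fun hΩm hpoint, integral_const_mul, hnorm t, mul_one]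
  rw [hden, Real.exp_neg, div_inv_eq_mul, mul_comm, ← hsol p hp t]

/-- A normalized time-dependent weight on a compact set `Ω` satisfying the differential
equation `∂_t ω = −(x + y − D₀(t)) ω`, with `D₀(t) = ∫_Ω (x+y) ω(x,y,t) dx dy`, is given by
`ω(x,y,t) = e^{−(x+y)t} ω(x,y,0) / ∫_Ω e^{−(x'+y')t} ω(x',y',0) dx' dy'`. -/
theorem weight_representation (Ω : Set (ℝ × ℝ)) (ω : ℝ × ℝ → ℝ → ℝ)
    (hΩc : IsCompact Ω) (hΩm : MeasurableSet Ω)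
    (hcont : Continuous fun q : (ℝ × ℝ) × ℝ => ω q.1 q.2)
    (hnorm : ∀ t : ℝ, (∫ p in Ω, ω p t) = 1)
    (hD₀cont : Continuous fun t : ℝ => ∫ p in Ω, (p.1 + p.2) * ω p t)
    (hode : ∀ p ∈ Ω, ∀ t : ℝ,
      HasDerivAt (fun s => ω p s)
        (-(p.1 + p.2 - ∫ q in Ω, (q.1 + q.2) * ω q t) * ω p t) t)
    (hκpos : ∀ t : ℝ, 0 < ∫ q in Ω, Real.exp (-(q.1 + q.2) * t) * ω q 0) :
    ∀ p ∈ Ω, ∀ t : ℝ,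
      ω p t = Real.exp (-(p.1 + p.2) * t) * ω p 0
        / ∫ q in Ω, Real.exp (-(q.1 + q.2) * t) * ω q 0 :=
  weight_representation_general Ω ω hΩm hnorm hD₀cont hode
end

section
/- Let R > 0 and let m : ℕ × ℕ × ℝ → ℝ be such that each t ↦ m_{h,k}(t) is differentiable with ṁ_{h,k}(t) = −m_{h+1,k}(t) − m_{h,k+1}(t) + m_{h,k}(t)·(m_{1,0}(t) + m_{0,1}(t)) for all h, k ≥ 0 and t, and |m_{h,k}(t)| ≤ R^{h+k} for all h, k, t, with |m_{1,0}(t)| + |m_{0,1}(t)| ≤ 2R. Let z₁, z₂ ∈ ℂ with |z₁| > R and |z₂| > R, and define S(t) = Σ_{(h,k)∈ℕ×ℕ} m_{h,k}(t)/(z₁^{h+1} z₂^{k+1}), S₁(t) = Σ_{h∈ℕ} m_{h,0}(t)/z₁^{h+1}, S₂(t) = Σ_{k∈ℕ} m_{0,k}(t)/z₂^{k+1}. Then all three series are absolutely summable for every t, S is differentiable, and Ṡ(t) = (m_{1,0}(t) + m_{0,1}(t) − z₁ − z₂)·S(t) + S₁(t) + S₂(t) for every t. -/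
/-!
Both series are dominated by the product of geometric series `Σ Rʰ/|z₁|ʰ⁺¹ · Σ Rᵏ/|z₂|ᵏ⁺¹`, and
so is the series of the derivatives, whose coefficients are `O(R^{h+k+1})`; hence `S` may be
differentiated term by term. In the differentiated series the shifted moments are recovered from
`S` itself: splitting off the row `h = 0` gives `z₁ S = S₂ + Σ m_{h+1,k}/(z₁^{h+1} z₂^{k+1})`, and
symmetrically `z₂ S = S₁ + Σ m_{h,k+1}/(z₁^{h+1} z₂^{k+1})`.
-/

section Split

variable {α : Type*} [AddCommGroup α] [UniformSpace α] [IsUniformAddGroup α] [CompleteSpace α]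
  [T2Space α] {f : ℕ × ℕ → α}

theorem Summable.tsum_prod_eq_zero_add_fst (hf : Summable f) :
    ∑' p, f p = ∑' k, f (0, k) + ∑' p : ℕ × ℕ, f (p.1 + 1, p.2) := by
  have hshift : Summable fun p : ℕ × ℕ => f (p.1 + 1, p.2) :=
    hf.comp_injective (i := fun p : ℕ × ℕ => (p.1 + 1, p.2)) fun p q h => by
      simpa [Prod.ext_iff] using h
  rw [hf.tsum_prod, hf.prod.tsum_eq_zero_add, hshift.tsum_prod]

theorem Summable.tsum_prod_eq_zero_add_snd (hf : Summable f) :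
    ∑' p, f p = ∑' h, f (h, 0) + ∑' p : ℕ × ℕ, f (p.1, p.2 + 1) := by
  have hswap := (hf.comp_injective (Equiv.prodComm ℕ ℕ).injective).tsum_prod_eq_zero_add_fst
  rw [← (Equiv.prodComm ℕ ℕ).tsum_eq f,
    ← (Equiv.prodComm ℕ ℕ).tsum_eq fun p => f (p.1, p.2 + 1)]
  exact hswap

end Split

noncomputable def stieltjes (a : ℕ → ℂ) (z : ℂ) : ℂ :=
  ∑' n, a n / z ^ (n + 1)

noncomputable def stieltjes₂ (a : ℕ → ℕ → ℂ) (z₁ z₂ : ℂ) : ℂ :=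
  ∑' p : ℕ × ℕ, a p.1 p.2 / (z₁ ^ (p.1 + 1) * z₂ ^ (p.2 + 1))

section Stieltjes

variable {R C : ℝ} {z z₁ z₂ : ℂ}

theorem summable_pow_div_norm_pow_succ (hR : 0 ≤ R) (hz : R < ‖z‖) :
    Summable fun n : ℕ => R ^ n / ‖z‖ ^ (n + 1) := by
  have hz₀ : 0 < ‖z‖ := hR.trans_lt hz
  refine ((summable_geometric_of_lt_one (by positivity) ((div_lt_one hz₀).2 hz)).div_const
    ‖z‖).congr fun n => ?_
  rw [div_pow, div_div, pow_succ]

theorem summable_norm_div_pow_succ {a : ℕ → ℂ} (hR : 0 ≤ R) (hz : R < ‖z‖)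
    (ha : ∀ n, ‖a n‖ ≤ C * R ^ n) : Summable fun n => ‖a n / z ^ (n + 1)‖ := by
  refine ((summable_pow_div_norm_pow_succ hR hz).mul_left C).of_nonneg_of_le
    (fun _ => norm_nonneg _) fun n => ?_
  rw [norm_div, norm_pow, mul_div_assoc']
  exact div_le_div_of_nonneg_right (ha n) (by positivity)

theorem norm_div_pow_mul_pow_le {x : ℂ} {h k : ℕ} (hx : ‖x‖ ≤ C * R ^ (h + k)) :
    ‖x / (z₁ ^ (h + 1) * z₂ ^ (k + 1))‖
      ≤ C * (R ^ h / ‖z₁‖ ^ (h + 1) * (R ^ k / ‖z₂‖ ^ (k + 1))) := by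
  rw [norm_div, norm_mul, norm_pow, norm_pow]
  calc ‖x‖ / (‖z₁‖ ^ (h + 1) * ‖z₂‖ ^ (k + 1))
      ≤ C * R ^ (h + k) / (‖z₁‖ ^ (h + 1) * ‖z₂‖ ^ (k + 1)) :=
        div_le_div_of_nonneg_right hx (by positivity)
    _ = C * (R ^ h / ‖z₁‖ ^ (h + 1) * (R ^ k / ‖z₂‖ ^ (k + 1))) := by ring

theorem summable_mul_pow_div_norm_pow_succ_prod (hR : 0 ≤ R) (hz₁ : R < ‖z₁‖) (hz₂ : R < ‖z₂‖) :
    Summable fun p : ℕ × ℕ => C * (R ^ p.1 / ‖z₁‖ ^ (p.1 + 1) * (R ^ p.2 / ‖z₂‖ ^ (p.2 + 1))) :=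
  ((summable_pow_div_norm_pow_succ hR hz₁).mul_of_nonneg (summable_pow_div_norm_pow_succ hR hz₂)
    (fun _ => by positivity) fun _ => by positivity).mul_left C

theorem summable_norm_div_pow_mul_pow {a : ℕ → ℕ → ℂ} (hR : 0 ≤ R) (hz₁ : R < ‖z₁‖)
    (hz₂ : R < ‖z₂‖) (ha : ∀ h k, ‖a h k‖ ≤ C * R ^ (h + k)) :
    Summable fun p : ℕ × ℕ => ‖a p.1 p.2 / (z₁ ^ (p.1 + 1) * z₂ ^ (p.2 + 1))‖ :=
  (summable_mul_pow_div_norm_pow_succ_prod hR hz₁ hz₂).of_nonneg_of_le (fun _ => norm_nonneg _)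
    fun p => norm_div_pow_mul_pow_le (ha p.1 p.2)

theorem mul_stieltjes₂_eq_fst {a : ℕ → ℕ → ℂ} (hz₁ : z₁ ≠ 0)
    (ha : Summable fun p : ℕ × ℕ => a p.1 p.2 / (z₁ ^ (p.1 + 1) * z₂ ^ (p.2 + 1))) :
    z₁ * stieltjes₂ a z₁ z₂ = stieltjes (a 0) z₂ + stieltjes₂ (fun h k => a (h + 1) k) z₁ z₂ := by
  rw [stieltjes₂, ← tsum_mul_left, (ha.mul_left z₁).tsum_prod_eq_zero_add_fst]
  congr 1 <;> refine tsum_congr fun _ => ?_ <;> field_simp <;> ring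

theorem mul_stieltjes₂_eq_snd {a : ℕ → ℕ → ℂ} (hz₂ : z₂ ≠ 0)
    (ha : Summable fun p : ℕ × ℕ => a p.1 p.2 / (z₁ ^ (p.1 + 1) * z₂ ^ (p.2 + 1))) :
    z₂ * stieltjes₂ a z₁ z₂
      = stieltjes (fun h => a h 0) z₁ + stieltjes₂ (fun h k => a h (k + 1)) z₁ z₂ := by
  rw [stieltjes₂, ← tsum_mul_left, (ha.mul_left z₂).tsum_prod_eq_zero_add_snd]
  congr 1 <;> refine tsum_congr fun _ => ?_ <;> field_simp <;> ring

theorem hasDerivAt_stieltjes₂ {a a' : ℕ → ℕ → ℝ → ℂ} {t : ℝ} (hR : 0 ≤ R) (hz₁ : R < ‖z₁‖)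
    (hz₂ : R < ‖z₂‖) (hder : ∀ h k s, HasDerivAt (a h k) (a' h k s) s)
    (ha' : ∀ h k s, ‖a' h k s‖ ≤ C * R ^ (h + k))
    (ha : Summable fun p : ℕ × ℕ => a p.1 p.2 t / (z₁ ^ (p.1 + 1) * z₂ ^ (p.2 + 1))) :
    HasDerivAt (fun s => stieltjes₂ (fun h k => a h k s) z₁ z₂)
      (stieltjes₂ (fun h k => a' h k t) z₁ z₂) t :=
  hasDerivAt_tsum (summable_mul_pow_div_norm_pow_succ_prod hR hz₁ hz₂)
    (fun p s => (hder p.1 p.2 s).div_const _)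
    (fun p s => norm_div_pow_mul_pow_le (ha' p.1 p.2 s)) ha t

theorem stieltjes₂_moment_ode_rhs {a : ℕ → ℕ → ℂ} (c : ℂ) (hR : 0 ≤ R) (hz₁ : R < ‖z₁‖)
    (hz₂ : R < ‖z₂‖) (ha : ∀ h k, ‖a h k‖ ≤ C * R ^ (h + k)) :
    stieltjes₂ (fun h k => -a (h + 1) k - a h (k + 1) + a h k * c) z₁ z₂
      = (c - z₁ - z₂) * stieltjes₂ a z₁ z₂ + stieltjes (fun h => a h 0) z₁
        + stieltjes (a 0) z₂ := by
  have hz₁₀ : z₁ ≠ 0 := norm_pos_iff.1 (hR.trans_lt hz₁)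
  have hz₂₀ : z₂ ≠ 0 := norm_pos_iff.1 (hR.trans_lt hz₂)
  have hS := (summable_norm_div_pow_mul_pow hR hz₁ hz₂ ha).of_norm
  have hS₁ := (summable_norm_div_pow_mul_pow (a := fun h k => a (h + 1) k) (C := C * R)
    hR hz₁ hz₂ fun h k => (ha (h + 1) k).trans_eq (by ring)).of_norm
  have hS₂ := (summable_norm_div_pow_mul_pow (a := fun h k => a h (k + 1)) (C := C * R)
    hR hz₁ hz₂ fun h k => (ha h (k + 1)).trans_eq (by ring)).of_norm
  have hlin : stieltjes₂ (fun h k => -a (h + 1) k - a h (k + 1) + a h k * c) z₁ z₂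
      = -stieltjes₂ (fun h k => a (h + 1) k) z₁ z₂ - stieltjes₂ (fun h k => a h (k + 1)) z₁ z₂
        + stieltjes₂ a z₁ z₂ * c := by
    refine (tsum_congr fun p => ?_).trans ((hS₁.hasSum.neg.sub hS₂.hasSum).add
      (hS.hasSum.mul_right c)).tsum_eq
    ring
  rw [hlin]
  linear_combination mul_stieltjes₂_eq_fst hz₁₀ hS + mul_stieltjes₂_eq_snd hz₂₀ hS

end Stieltjes

theorem abs_moment_ode_rhs_le {R : ℝ} (hR : 0 ≤ R) {m : ℕ → ℕ → ℝ → ℝ}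
    (hbd : ∀ h k t, |m h k t| ≤ R ^ (h + k)) (h k : ℕ) (t : ℝ) :
    |-(m (h + 1) k t) - m h (k + 1) t + m h k t * (m 1 0 t + m 0 1 t)| ≤ 4 * R * R ^ (h + k) := by
  have h₁ := hbd (h + 1) k t
  have h₂ := hbd h (k + 1) t
  have h₃ : |m h k t * (m 1 0 t + m 0 1 t)| ≤ R ^ (h + k) * (R ^ 1 + R ^ 1) := by
    rw [abs_mul]
    exact mul_le_mul (hbd h k t) ((abs_add_le _ _).trans (add_le_add (hbd 1 0 t) (hbd 0 1 t)))
      (abs_nonneg _) (by positivity)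
  calc _ ≤ |m (h + 1) k t| + |m h (k + 1) t| + |m h k t * (m 1 0 t + m 0 1 t)| :=
        (abs_add_le _ _).trans (add_le_add_left (abs_sub _ _ |>.trans_eq (by rw [abs_neg])) _)
    _ ≤ 4 * R * R ^ (h + k) := by
      ring_nf at h₁ h₂ h₃ ⊢; linarith

theorem stieltjes_series_ode_general (R : ℝ) (hR : 0 < R) (m : ℕ → ℕ → ℝ → ℝ)
    (hder : ∀ (h k : ℕ) (t : ℝ),
      HasDerivAt (fun s => m h k s)
        (-(m (h + 1) k t) - m h (k + 1) t + m h k t * (m 1 0 t + m 0 1 t)) t)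
    (hbd : ∀ (h k : ℕ) (t : ℝ), |m h k t| ≤ R ^ (h + k))
    (z₁ z₂ : ℂ) (hz₁ : R < ‖z₁‖) (hz₂ : R < ‖z₂‖) :
    (∀ t : ℝ, Summable fun hk : ℕ × ℕ =>
      ‖((m hk.1 hk.2 t : ℝ) : ℂ) / (z₁ ^ (hk.1 + 1) * z₂ ^ (hk.2 + 1))‖) ∧
    (∀ t : ℝ, Summable fun h : ℕ => ‖((m h 0 t : ℝ) : ℂ) / z₁ ^ (h + 1)‖) ∧
    (∀ t : ℝ, Summable fun k : ℕ => ‖((m 0 k t : ℝ) : ℂ) / z₂ ^ (k + 1)‖) ∧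
    (∀ t : ℝ,
      HasDerivAt
        (fun s => ∑' hk : ℕ × ℕ,
          ((m hk.1 hk.2 s : ℝ) : ℂ) / (z₁ ^ (hk.1 + 1) * z₂ ^ (hk.2 + 1)))
        ((((m 1 0 t + m 0 1 t : ℝ) : ℂ) - z₁ - z₂)
            * (∑' hk : ℕ × ℕ,
                ((m hk.1 hk.2 t : ℝ) : ℂ) / (z₁ ^ (hk.1 + 1) * z₂ ^ (hk.2 + 1)))
          + (∑' h : ℕ, ((m h 0 t : ℝ) : ℂ) / z₁ ^ (h + 1))
          + (∑' k : ℕ, ((m 0 k t : ℝ) : ℂ) / z₂ ^ (k + 1))) t) := by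
  have hm (t : ℝ) (h k : ℕ) : ‖((m h k t : ℝ) : ℂ)‖ ≤ 1 * R ^ (h + k) := by
    rw [Complex.norm_real, Real.norm_eq_abs, one_mul]
    exact hbd h k t
  have hS (t : ℝ) := summable_norm_div_pow_mul_pow hR.le hz₁ hz₂ (hm t)
  refine ⟨hS,
    fun t => summable_norm_div_pow_succ (C := 1) hR.le hz₁ fun h => by simpa using hm t h 0,
    fun t => summable_norm_div_pow_succ (C := 1) hR.le hz₂ fun k => by simpa using hm t 0 k,
    fun t => ?_⟩
  have hderiv := hasDerivAt_stieltjes₂ hR.le hz₁ hz₂ (fun h k s => (hder h k s).ofReal_comp)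
    (fun h k s => by
      rw [Complex.norm_real, Real.norm_eq_abs]; exact abs_moment_ode_rhs_le hR.le hbd h k s)
    (hS t).of_norm
  push_cast at hderiv ⊢
  rwa [stieltjes₂_moment_ode_rhs _ hR.le hz₁ hz₂ (hm t)] at hderiv

/-- If moments `m_{h,k}(t)` satisfy the Toda moment equations and geometric bounds, then the
double Stieltjes series `S(t) = Σ m_{h,k}(t)/(z₁^{h+1} z₂^{k+1})` and the marginal series
converge absolutely, and `Ṡ(t) = (m_{1,0}(t) + m_{0,1}(t) − z₁ − z₂) S(t) + S₁(t) + S₂(t)`. -/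
theorem stieltjes_series_ode (R : ℝ) (hR : 0 < R) (m : ℕ → ℕ → ℝ → ℝ)
    (hder : ∀ (h k : ℕ) (t : ℝ),
      HasDerivAt (fun s => m h k s)
        (-(m (h + 1) k t) - m h (k + 1) t + m h k t * (m 1 0 t + m 0 1 t)) t)
    (hbd : ∀ (h k : ℕ) (t : ℝ), |m h k t| ≤ R ^ (h + k))
    (hbd1 : ∀ t : ℝ, |m 1 0 t| + |m 0 1 t| ≤ 2 * R)
    (z₁ z₂ : ℂ) (hz₁ : R < ‖z₁‖) (hz₂ : R < ‖z₂‖) :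
    (∀ t : ℝ, Summable fun hk : ℕ × ℕ =>
      ‖((m hk.1 hk.2 t : ℝ) : ℂ) / (z₁ ^ (hk.1 + 1) * z₂ ^ (hk.2 + 1))‖) ∧
    (∀ t : ℝ, Summable fun h : ℕ => ‖((m h 0 t : ℝ) : ℂ) / z₁ ^ (h + 1)‖) ∧
    (∀ t : ℝ, Summable fun k : ℕ => ‖((m 0 k t : ℝ) : ℂ) / z₂ ^ (k + 1)‖) ∧
    (∀ t : ℝ,
      HasDerivAt
        (fun s => ∑' hk : ℕ × ℕ,
          ((m hk.1 hk.2 s : ℝ) : ℂ) / (z₁ ^ (hk.1 + 1) * z₂ ^ (hk.2 + 1)))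
        ((((m 1 0 t + m 0 1 t : ℝ) : ℂ) - z₁ - z₂)
            * (∑' hk : ℕ × ℕ,
                ((m hk.1 hk.2 t : ℝ) : ℂ) / (z₁ ^ (hk.1 + 1) * z₂ ^ (hk.2 + 1)))
          + (∑' h : ℕ, ((m h 0 t : ℝ) : ℂ) / z₁ ^ (h + 1))
          + (∑' k : ℕ, ((m 0 k t : ℝ) : ℂ) / z₂ ^ (k + 1))) t) :=
  stieltjes_series_ode_general R hR m hder hbd z₁ z₂ hz₁ hz₂
end
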